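/- For every μ > 0, the vector field F(x,y,z) = (μ(y²+z²), μxy + xz, −xy + μxz) on ℝ³ is incomplete: the function e(x,y,z) = −x² + y² + z² is a first integral, the cone {e = 0} is invariant, and on it the x-coordinate satisfies x' = μx², so every solution starting at a point of the cone with x₀ > 0 blows up in finite time. -/

import Mathlib

/-!
Along a solution, `e = -x² + y² + z²` has derivative `2(-x·x' + y·y' + z·z') = 0`, the `μ`-terms
and the rotation terms cancelling separately. On the cone `e = 0` the first component
`μ(y² + z²)` of the field is therefore `μx²`, and the Riccati equation `x' = μx²` forces
`1/x(t) = 1/x(0) - μt` while `x` stays positive, which is impossible at `t = 1/(μ x(0))`.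
-/

/-- The geodesic field of `q = diag(−1,1,1)` on `e(μ)`:
`(μ(y²+z²), μxy + xz, −xy + μxz)`. -/
def Fe (μ : ℝ) (v : Fin 3 → ℝ) : Fin 3 → ℝ :=
  ![μ * ((v 1) ^ 2 + (v 2) ^ 2), μ * v 0 * v 1 + v 0 * v 2, -(v 0 * v 1) + μ * v 0 * v 2]

open Set

lemma inv_add_mul_eq_of_hasDerivAt_mul_sq {x : ℝ → ℝ} {c T : ℝ}
    (hx : ∀ t, HasDerivAt x (c * x t ^ 2) t) (hne : ∀ t ∈ Icc 0 T, x t ≠ 0) (hT : 0 ≤ T) :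
    (x T)⁻¹ + c * T = (x 0)⁻¹ := by
  have hderiv : ∀ t ∈ Icc 0 T, HasDerivAt (fun u => (x u)⁻¹ + c * u) 0 t := by
    intro t ht
    have h : HasDerivAt (fun u => (x u)⁻¹ + c * u) (-(c * x t ^ 2) / x t ^ 2 + c * 1) t :=
      ((hx t).inv (hne t ht)).add ((hasDerivAt_id' t).const_mul c)
    refine h.congr_deriv ?_
    field_simp [hne t ht]
    ring
  have hconst := constant_of_has_deriv_right_zero
    (fun t ht => (hderiv t ht).continuousAt.continuousWithinAt)
    (fun t ht => (hderiv t (Ico_subset_Icc_self ht)).hasDerivWithinAt) T ⟨hT, le_rfl⟩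
  simpa using hconst

lemma not_forall_hasDerivAt_mul_sq {x : ℝ → ℝ} {c : ℝ} (hc : 0 < c) (h0 : 0 < x 0) :
    ¬ ∀ t, HasDerivAt x (c * x t ^ 2) t := by
  intro hx
  have hmono : Monotone x := monotone_of_hasDerivAt_nonneg hx fun t => by positivity
  have hpos : ∀ t, 0 ≤ t → 0 < x t := fun t ht => h0.trans_le (hmono ht)
  have hT : 0 ≤ (c * x 0)⁻¹ := by positivity
  have hinv := inv_add_mul_eq_of_hasDerivAt_mul_sq hx (fun t ht => (hpos t ht.1).ne') hT
  have hcT : c * (c * x 0)⁻¹ = (x 0)⁻¹ := by field_simp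
  have hxT : 0 < (x (c * x 0)⁻¹)⁻¹ := inv_pos.mpr (hpos _ hT)
  linarith

def lorentzSq (v : Fin 3 → ℝ) : ℝ := -(v 0) ^ 2 + (v 1) ^ 2 + (v 2) ^ 2

lemma hasDerivAt_lorentzSq_comp {μ t : ℝ} {γ : ℝ → Fin 3 → ℝ}
    (hγ : HasDerivAt γ (Fe μ (γ t)) t) : HasDerivAt (fun u => lorentzSq (γ u)) 0 t := by
  have h := (((hasDerivAt_pi.mp hγ 0).pow 2).neg.add ((hasDerivAt_pi.mp hγ 1).pow 2)).add
    ((hasDerivAt_pi.mp hγ 2).pow 2)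
  refine h.congr_deriv ?_
  simp only [Fe, Matrix.cons_val_zero, Matrix.cons_val_one, Matrix.cons_val_two,
    Matrix.tail_cons, Matrix.head_cons]
  ring

lemma lorentzSq_comp_eq_of_forall_hasDerivAt {μ : ℝ} {γ : ℝ → Fin 3 → ℝ}
    (hγ : ∀ t, HasDerivAt γ (Fe μ (γ t)) t) (t : ℝ) : lorentzSq (γ t) = lorentzSq (γ 0) :=
  is_const_of_deriv_eq_zero (fun u => (hasDerivAt_lorentzSq_comp (hγ u)).differentiableAt)
    (fun u => (hasDerivAt_lorentzSq_comp (hγ u)).deriv) t 0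

lemma hasDerivAt_fst_of_lorentzSq_eq_zero {μ : ℝ} {γ : ℝ → Fin 3 → ℝ}
    (hγ : ∀ t, HasDerivAt γ (Fe μ (γ t)) t) (hcone : lorentzSq (γ 0) = 0) (t : ℝ) :
    HasDerivAt (fun u => γ u 0) (μ * γ t 0 ^ 2) t := by
  have hsq : γ t 1 ^ 2 + γ t 2 ^ 2 = γ t 0 ^ 2 := by
    have := lorentzSq_comp_eq_of_forall_hasDerivAt hγ t
    rw [hcone, lorentzSq] at this
    linarith
  simpa [Fe, hsq] using hasDerivAt_pi.mp (hγ t) 0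

/-- For `μ > 0`, `e = −x² + y² + z²` is a first integral of the geodesic
field on `e(μ)`, and along any solution starting on the cone `{e = 0}` with `x 0 > 0`
one has `x' = μx²`, so no such solution can be globally defined: the field is
incomplete. -/
theorem stmt_19 (μ : ℝ) (hμ : 0 < μ) :
    (∀ (γ : ℝ → Fin 3 → ℝ) (t : ℝ), HasDerivAt γ (Fe μ (γ t)) t →
        HasDerivAt (fun u => -(γ u 0) ^ 2 + (γ u 1) ^ 2 + (γ u 2) ^ 2) 0 t) ∧
    (∀ γ : ℝ → Fin 3 → ℝ, (∀ t, HasDerivAt γ (Fe μ (γ t)) t) →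
        -(γ 0 0) ^ 2 + (γ 0 1) ^ 2 + (γ 0 2) ^ 2 = 0 → 0 < γ 0 0 →
        (∀ t, HasDerivAt (fun u => γ u 0) (μ * (γ t 0) ^ 2) t) ∧ False) := by
  refine ⟨fun γ t hγ => hasDerivAt_lorentzSq_comp hγ, fun γ hγ hcone hx0 => ?_⟩
  have hx := hasDerivAt_fst_of_lorentzSq_eq_zero hγ hcone
  exact ⟨hx, not_forall_hasDerivAt_mul_sq hμ hx0 hx⟩
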